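/- Let V be a real normed vector space and let α, β, γ : [0,1] → V be continuously differentiable paths with α(1) = β(0), β(1) = γ(0), and F(α), F(β), F(γ) > 0. Then the energy-minimizing concatenation is associative: c_min(c_min(α,β),γ)(t) = c_min(α,c_min(β,γ))(t) for every t ∈ [0,1]. (Both sides equal the path which traverses α on [0, a/(a+b+c)], β on [a/(a+b+c), (a+b)/(a+b+c)] and γ on [(a+b)/(a+b+c), 1], where a = F(α), b = F(β), c = F(γ).) -/

import Mathlib

variable {V : Type*} [NormedAddCommGroup V] [NormedSpace ℝ V]

/-- The energy `E(γ) = ∫₀¹ ‖γ'(t)‖² dt` of a path `γ : [0,1] → V`, where the derivative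
is the (almost everywhere defined) derivative within `[0,1]`. -/
noncomputable def pathEnergy (γ : ℝ → V) : ℝ :=
  ∫ t in (0 : ℝ)..1, ‖derivWithin γ (Set.Icc (0 : ℝ) 1) t‖ ^ 2

/-- The `L²`-norm `F(γ) = E(γ)^{1/2}` of a path `γ : [0,1] → V`. -/
noncomputable def pathNorm (γ : ℝ → V) : ℝ :=
  Real.sqrt (pathEnergy γ)

/-- The concatenation at time `s` of two paths `γ, δ : [0,1] → V`:
`c_s(γ,δ)(t) = γ(t/s)` for `0 ≤ t ≤ s` and `c_s(γ,δ)(t) = δ((t−s)/(1−s))` for `s ≤ t ≤ 1`. -/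
noncomputable def concatAt (s : ℝ) (γ δ : ℝ → V) : ℝ → V :=
  fun t => if t ≤ s then γ (t / s) else δ ((t - s) / (1 - s))

/-- The energy-minimizing concatenation `c_min(γ,δ) = c_{s_min}(γ,δ)` with
`s_min = F(γ)/(F(γ)+F(δ))`. -/
noncomputable def concatMin (γ δ : ℝ → V) : ℝ → V :=
  concatAt (pathNorm γ / (pathNorm γ + pathNorm δ)) γ δ


/-!
The energy of a concatenation is `E(c_s(γ,δ)) = E(γ)/s + E(δ)/(1-s)`, since the pieces are
traversed at speeds `1/s` and `1/(1-s)`. At `s = a/(a+b)` with `a = F(γ)`, `b = F(δ)` this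
equals `(a+b)²`, so `F(c_min(γ,δ)) = F(γ) + F(δ)`. Hence both bracketings of a triple
concatenation split `[0,1]` at `a/(a+b+c)` and `(a+b)/(a+b+c)`, and they agree pointwise.
-/

open Set MeasureTheory

section Energy

variable {f h : ℝ → V} {p q : ℝ}

lemma derivWithin_Icc_eq_of_eqOn_rescale (hf : DifferentiableOn ℝ f (Icc 0 1))
    (hp : 0 ≤ p) (hpq : p < q) (hq : q ≤ 1)
    (heq : EqOn h (fun u => f ((u - p) / (q - p))) (Ioo p q)) {t : ℝ} (ht : t ∈ Ioo p q) :
    derivWithin h (Icc 0 1) t = (q - p)⁻¹ • derivWithin f (Icc 0 1) ((t - p) / (q - p)) := by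
  have hqp : 0 < q - p := sub_pos.2 hpq
  have hmem : (t - p) / (q - p) ∈ Ioo (0 : ℝ) 1 :=
    ⟨div_pos (sub_pos.2 ht.1) hqp, (div_lt_one hqp).2 (by linarith [ht.2])⟩
  have hf' : HasDerivAt f (derivWithin f (Icc 0 1) ((t - p) / (q - p))) ((t - p) / (q - p)) :=
    (hf _ (Ioo_subset_Icc_self hmem)).hasDerivWithinAt.hasDerivAt
      (Icc_mem_nhds hmem.1 hmem.2)
  have hrescale : HasDerivAt (fun u => (u - p) / (q - p)) (q - p)⁻¹ t := by
    simpa [one_div] using ((hasDerivAt_id t).sub_const p).div_const (q - p)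
  rw [derivWithin_of_mem_nhds (Icc_mem_nhds (hp.trans_lt ht.1) (ht.2.trans_le hq)),
    (heq.eventuallyEq_of_mem (Ioo_mem_nhds ht.1 ht.2)).deriv_eq]
  exact (hf'.scomp t hrescale).deriv

variable (hf : ContDiffOn ℝ 1 f (Icc 0 1)) (hp : 0 ≤ p) (hpq : p < q) (hq : q ≤ 1)
  (heq : EqOn h (fun u => f ((u - p) / (q - p))) (Ioo p q))
include hf hp hpq hq heq

lemma norm_sq_derivWithin_ae_eq_rescale :
    ∀ᵐ t, t ∈ uIoc p q → ‖derivWithin h (Icc 0 1) t‖ ^ 2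
      = (q - p)⁻¹ ^ 2 * ‖derivWithin f (Icc 0 1) ((t - p) / (q - p))‖ ^ 2 := by
  filter_upwards [volume.ae_ne q] with t htq ht
  rw [uIoc_of_le hpq.le] at ht
  rw [derivWithin_Icc_eq_of_eqOn_rescale (hf.differentiableOn one_ne_zero) hp hpq hq heq
    ⟨ht.1, ht.2.lt_of_ne htq⟩, norm_smul, mul_pow, Real.norm_eq_abs,
    abs_of_pos (inv_pos.2 (sub_pos.2 hpq))]

lemma intervalIntegrable_norm_sq_derivWithin_rescale :
    IntervalIntegrable (fun t => ‖derivWithin h (Icc 0 1) t‖ ^ 2) volume p q := by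
  have hqp : 0 < q - p := sub_pos.2 hpq
  have hcont : ContinuousOn (fun u => ‖derivWithin f (Icc 0 1) u‖ ^ 2) (Icc 0 1) :=
    ((hf.continuousOn_derivWithin (uniqueDiffOn_Icc zero_lt_one) le_rfl).norm).pow 2
  have hmaps : MapsTo (fun u => (u - p) / (q - p)) (uIcc p q) (Icc 0 1) := by
    intro u hu
    rw [uIcc_of_le hpq.le] at hu
    exact ⟨div_nonneg (by linarith [hu.1]) hqp.le, (div_le_one hqp).2 (by linarith [hu.2])⟩
  have hrescaled : ContinuousOn
      (fun t => (q - p)⁻¹ ^ 2 * ‖derivWithin f (Icc 0 1) ((t - p) / (q - p))‖ ^ 2) (uIcc p q) :=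
    continuousOn_const.mul (hcont.comp (by fun_prop) hmaps)
  refine hrescaled.intervalIntegrable.congr_ae ?_
  filter_upwards [ae_restrict_mem measurableSet_uIoc,
    ae_restrict_of_ae (norm_sq_derivWithin_ae_eq_rescale hf hp hpq hq heq)] with t ht hae
  exact (hae ht).symm

lemma integral_norm_sq_derivWithin_rescale :
    ∫ t in p..q, ‖derivWithin h (Icc 0 1) t‖ ^ 2 = pathEnergy f / (q - p) := by
  have hqp : q - p ≠ 0 := (sub_pos.2 hpq).ne'
  rw [intervalIntegral.integral_congr_ae (norm_sq_derivWithin_ae_eq_rescale hf hp hpq hq heq),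
    intervalIntegral.integral_const_mul]
  simp only [sub_div]
  rw [intervalIntegral.integral_comp_div_sub (fun u => ‖derivWithin f (Icc 0 1) u‖ ^ 2) hqp,
    sub_self, div_sub_div_same, div_self hqp, pathEnergy, smul_eq_mul]
  field_simp

end Energy

lemma pathEnergy_concatAt {f g : ℝ → V} (hf : ContDiffOn ℝ 1 f (Icc 0 1))
    (hg : ContDiffOn ℝ 1 g (Icc 0 1)) {s : ℝ} (hs0 : 0 < s) (hs1 : s < 1) :
    pathEnergy (concatAt s f g) = pathEnergy f / s + pathEnergy g / (1 - s) := by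
  have hleft : EqOn (concatAt s f g) (fun u => f ((u - 0) / (s - 0))) (Ioo 0 s) := by
    intro u hu
    simp [concatAt, hu.2.le]
  have hright : EqOn (concatAt s f g) (fun u => g ((u - s) / (1 - s))) (Ioo s 1) := by
    intro u hu
    simp [concatAt, hu.1]
  rw [pathEnergy, ← intervalIntegral.integral_add_adjacent_intervals
      (intervalIntegrable_norm_sq_derivWithin_rescale hf le_rfl hs0 hs1.le hleft)
      (intervalIntegrable_norm_sq_derivWithin_rescale hg hs0.le hs1 le_rfl hright),
    integral_norm_sq_derivWithin_rescale hf le_rfl hs0 hs1.le hleft,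
    integral_norm_sq_derivWithin_rescale hg hs0.le hs1 le_rfl hright, sub_zero]

lemma pathNorm_concatMin {f g : ℝ → V} (hf : ContDiffOn ℝ 1 f (Icc 0 1))
    (hg : ContDiffOn ℝ 1 g (Icc 0 1)) (hFf : 0 < pathNorm f) (hFg : 0 < pathNorm g) :
    pathNorm (concatMin f g) = pathNorm f + pathNorm g := by
  set a := pathNorm f
  set b := pathNorm g
  have hEf : pathEnergy f = a ^ 2 := (Real.sq_sqrt (Real.sqrt_pos.1 hFf).le).symm
  have hEg : pathEnergy g = b ^ 2 := (Real.sq_sqrt (Real.sqrt_pos.1 hFg).le).symm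
  have hs1 : a / (a + b) < 1 := (div_lt_one (by positivity)).2 (by linarith)
  have hE : a ^ 2 / (a / (a + b)) + b ^ 2 / (1 - a / (a + b)) = (a + b) ^ 2 := by
    field_simp [hFf.ne', hFg.ne']
    ring
  rw [concatMin, pathNorm, pathEnergy_concatAt hf hg (by positivity) hs1, hEf, hEg, hE,
    Real.sqrt_sq (by positivity)]

lemma concatAt_div_apply {W : Type*} (f g : ℝ → W) {p q : ℝ} (hp : 0 < p) (hpq : p < q)
    (t : ℝ) :
    concatAt (p / q) f g t = if t * q ≤ p then f (t * q / p) else g ((t * q - p) / (q - p)) := by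
  have hq : 0 < q := hp.trans hpq
  have hqp : q - p ≠ 0 := (sub_pos.2 hpq).ne'
  simp only [concatAt, le_div_iff₀ hq, div_div_eq_mul_div]
  congr 2
  field_simp

lemma concatAt_assoc {W : Type*} (f g h : ℝ → W) {a b c : ℝ} (ha : 0 < a) (hb : 0 < b)
    (hc : 0 < c) (t : ℝ) :
    concatAt ((a + b) / (a + b + c)) (concatAt (a / (a + b)) f g) h t
      = concatAt (a / (a + b + c)) f (concatAt (b / (b + c)) g h) t := by
  have hab : a + b ≠ 0 := by positivity
  have hbc : b + c ≠ 0 := by positivity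
  rw [concatAt_div_apply _ _ (by positivity) (by linarith),
    concatAt_div_apply _ _ ha (by linarith), concatAt_div_apply _ _ ha (by linarith),
    concatAt_div_apply _ _ hb (by linarith)]
  simp only [div_mul_cancel₀ _ hab, show a + b + c - a = b + c by ring,
    show a + b + c - (a + b) = c by ring, show a + b - a = b by ring, show b + c - b = c by ring,
    div_mul_cancel₀ _ hbc]
  split_ifs <;> first | rfl | linarith | rw [sub_sub]

theorem stmt_1_general (α β γ : ℝ → V)
    (hα : ContDiffOn ℝ 1 α (Set.Icc 0 1)) (hβ : ContDiffOn ℝ 1 β (Set.Icc 0 1))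
    (hγ : ContDiffOn ℝ 1 γ (Set.Icc 0 1))
    (hFα : 0 < pathNorm α) (hFβ : 0 < pathNorm β) (hFγ : 0 < pathNorm γ) :
    ∀ t ∈ Set.Icc (0 : ℝ) 1,
      concatMin (concatMin α β) γ t = concatMin α (concatMin β γ) t := by
  intro t _
  have hαβ := pathNorm_concatMin hα hβ hFα hFβ
  have hβγ := pathNorm_concatMin hβ hγ hFβ hFγ
  simp only [concatMin] at hαβ hβγ ⊢
  rw [hαβ, hβγ, ← add_assoc]
  exact concatAt_assoc α β γ hFα hFβ hFγ t

/-- If `α, β, γ : [0,1] → V` are continuously differentiable paths with `α(1) = β(0)`,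
`β(1) = γ(0)` and `F(α), F(β), F(γ) > 0`, then the energy-minimizing concatenation is
associative: `c_min(c_min(α,β),γ)(t) = c_min(α,c_min(β,γ))(t)` for every `t ∈ [0,1]`. -/
theorem stmt_1 (α β γ : ℝ → V)
    (hα : ContDiffOn ℝ 1 α (Set.Icc 0 1)) (hβ : ContDiffOn ℝ 1 β (Set.Icc 0 1))
    (hγ : ContDiffOn ℝ 1 γ (Set.Icc 0 1))
    (hαβ : α 1 = β 0) (hβγ : β 1 = γ 0)
    (hFα : 0 < pathNorm α) (hFβ : 0 < pathNorm β) (hFγ : 0 < pathNorm γ) :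
    ∀ t ∈ Set.Icc (0 : ℝ) 1,
      concatMin (concatMin α β) γ t = concatMin α (concatMin β γ) t :=
  stmt_1_general α β γ hα hβ hγ hFα hFβ hFγ
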